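/- arXiv:2004.09207 — 8 statements merged into one kernel-verified Lean document; each statement's English description precedes it below -/
import Mathlib

section
/- Let n ≥ 2 be an integer and let A_n be the set of integer sequences (x_1,…,x_n) with n ≥ x_1 ≥ x_2 ≥ ⋯ ≥ x_n ≥ 0, Σ_{i=1}^k x_i ≤ 2n + 6k − 16 for every k ∈ {1,…,n}, and Σ_{i=1}^n x_i ≤ 6n − 12. If (x_1,…,x_n) ∈ A_n maximizes S_n(x_1,…,x_n) = Σ_{i<j} x_i x_j² over A_n, then x_1 − x_2 ≤ 1. -/
/-- `S n x = Σ_{1 ≤ i < j ≤ n} x_i · x_j²` (sequences indexed from 1). -/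
def Spoly (n : ℕ) (x : ℕ → ℤ) : ℤ :=
  ∑ i ∈ Finset.Icc 1 n, ∑ j ∈ Finset.Icc 1 n, if i < j then x i * x j ^ 2 else 0

/-- Membership in `A_n`: integer sequences `(x_1, …, x_n)` with
`n ≥ x_1 ≥ x_2 ≥ ⋯ ≥ x_n ≥ 0`, `Σ_{i=1}^k x_i ≤ 2n + 6k − 16` for every
`k ∈ {1, …, n}`, and `Σ_{i=1}^n x_i ≤ 6n − 12`. -/
def memA (n : ℕ) (x : ℕ → ℤ) : Prop :=
  x 1 ≤ (n : ℤ) ∧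
  (∀ i, 1 ≤ i → i < n → x (i + 1) ≤ x i) ∧
  (0 ≤ x n) ∧
  (∀ k, 1 ≤ k → k ≤ n → ∑ i ∈ Finset.Icc 1 k, x i ≤ 2 * (n : ℤ) + 6 * (k : ℤ) - 16) ∧
  (∑ i ∈ Finset.Icc 1 n, x i ≤ 6 * (n : ℤ) - 12)

private lemma sum_split12 (f : ℕ → ℤ) (k : ℕ) (hk : 2 ≤ k) :
    ∑ i ∈ Finset.Icc 1 k, f i = f 1 + f 2 + ∑ i ∈ Finset.Icc 3 k, f i := by
  have h : Finset.Icc 1 k = insert 1 (insert 2 (Finset.Icc 3 k)) := by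
    ext i
    simp only [Finset.mem_Icc, Finset.mem_insert]
    omega
  rw [h, Finset.sum_insert (by simp only [Finset.mem_insert, Finset.mem_Icc]; omega),
    Finset.sum_insert (by simp only [Finset.mem_Icc]; omega)]
  ring

/-- If `(x_1, …, x_n) ∈ A_n` maximizes `S_n` over `A_n`, then `x_1 - x_2 ≤ 1`. -/
theorem stmt_5 (n : ℕ) (hn : 2 ≤ n) (x : ℕ → ℤ) (hx : memA n x)
    (hmax : ∀ y : ℕ → ℤ, memA n y → Spoly n y ≤ Spoly n x) :
    x 1 - x 2 ≤ 1 := by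
  by_contra hcon
  push_neg at hcon
  obtain ⟨h1, h2, h3, h4, h5⟩ := hx
  -- x 2 ≥ 0
  have hx2chain : ∀ j, 2 ≤ j → j ≤ n → x j ≤ x 2 := by
    intro j
    induction j with
    | zero => intro h; omega
    | succ m ih =>
      intro h2m hmn
      rcases Nat.lt_or_ge 2 (m + 1) with h | h
      · exact (h2 m (by omega) (by omega)).trans (ih (by omega) (by omega))
      · have hm : m + 1 = 2 := by omega
        rw [hm]
  have hx2 : 0 ≤ x 2 := le_trans h3 (hx2chain n hn le_rfl)
  set y : ℕ → ℤ := fun i => if i = 1 then x 1 - 1 else if i = 2 then x 2 + 1 else x i with hy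
  have hy1 : y 1 = x 1 - 1 := rfl
  have hy2 : y 2 = x 2 + 1 := rfl
  have hyk : ∀ k, 3 ≤ k → y k = x k := by
    intro k hk
    simp only [hy, if_neg (show k ≠ 1 by omega), if_neg (show k ≠ 2 by omega)]
  have hsum : ∀ k, 2 ≤ k → ∑ i ∈ Finset.Icc 1 k, y i = ∑ i ∈ Finset.Icc 1 k, x i := by
    intro k hk
    rw [sum_split12 y k hk, sum_split12 x k hk, hy1, hy2]
    have htail : ∑ i ∈ Finset.Icc 3 k, y i = ∑ i ∈ Finset.Icc 3 k, x i :=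
      Finset.sum_congr rfl fun i hi => hyk i (Finset.mem_Icc.mp hi).1
    rw [htail]; ring
  have hyA : memA n y := by
    refine ⟨?_, ?_, ?_, ?_, ?_⟩
    · rw [hy1]; omega
    · intro i hi hin
      rcases Nat.lt_or_ge i 3 with h | h
      · interval_cases i
        · rw [hy1, hy2]; omega
        · rw [hyk 3 le_rfl, hy2]
          have h23 : x 3 ≤ x 2 := by
            have := h2 2 (by omega) hin
            norm_num at this
            exact this
          omega
      · rw [hyk i (by omega), hyk (i + 1) (by omega)]
        exact h2 i hi hin
    · rcases Nat.lt_or_ge n 3 with h | h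
      · have hn2 : n = 2 := by omega
        rw [hn2, hy2]
        rw [hn2] at h3
        omega
      · rw [hyk n h]; exact h3
    · intro k hk hkn
      rcases Nat.lt_or_ge k 2 with h | h
      · have hk1 : k = 1 := by omega
        subst hk1
        have := h4 1 le_rfl (by omega)
        simp only [Finset.Icc_self, Finset.sum_singleton] at this ⊢
        rw [hy1]; omega
      · rw [hsum k h]; exact h4 k hk hkn
    · rw [hsum n hn]; exact h5
  -- compute the difference of Spoly
  have hdiff : Spoly n y - Spoly n x = (x 1 - 1) * (x 2 + 1) ^ 2 - x 1 * x 2 ^ 2 := by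
    unfold Spoly
    rw [← Finset.sum_sub_distrib]
    have hinner : ∀ i ∈ Finset.Icc 1 n,
        (∑ j ∈ Finset.Icc 1 n, if i < j then y i * y j ^ 2 else 0) -
          (∑ j ∈ Finset.Icc 1 n, if i < j then x i * x j ^ 2 else 0)
        = ∑ j ∈ Finset.Icc 1 n,
            ((if i < j then y i * y j ^ 2 else 0) - (if i < j then x i * x j ^ 2 else 0)) := by
      intro i _
      rw [Finset.sum_sub_distrib]
    rw [Finset.sum_congr rfl hinner]
    rw [sum_split12 _ n hn]
    have hg3 : ∑ i ∈ Finset.Icc 3 n, (∑ j ∈ Finset.Icc 1 n,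
        ((if i < j then y i * y j ^ 2 else 0) - (if i < j then x i * x j ^ 2 else 0))) = 0 := by
      apply Finset.sum_eq_zero
      intro i hi
      apply Finset.sum_eq_zero
      intro j _
      by_cases hij : i < j
      · have hi3 : 3 ≤ i := (Finset.mem_Icc.mp hi).1
        rw [if_pos hij, if_pos hij, hyk i hi3, hyk j (by omega)]
        ring
      · rw [if_neg hij, if_neg hij]; ring
    rw [hg3, sum_split12 (fun j => (if 1 < j then y 1 * y j ^ 2 else 0) -
        (if 1 < j then x 1 * x j ^ 2 else 0)) n hn,
      sum_split12 (fun j => (if 2 < j then y 2 * y j ^ 2 else 0) -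
        (if 2 < j then x 2 * x j ^ 2 else 0)) n hn]
    simp only [lt_irrefl, if_false, if_pos (show (1:ℕ) < 2 by norm_num),
      if_neg (show ¬ (2:ℕ) < 1 by norm_num), if_neg (show ¬ (2:ℕ) < 2 by norm_num)]
    have ht1 : ∑ j ∈ Finset.Icc 3 n, ((if 1 < j then y 1 * y j ^ 2 else 0) -
        (if 1 < j then x 1 * x j ^ 2 else 0)) = ∑ j ∈ Finset.Icc 3 n, (- (x j ^ 2)) := by
      apply Finset.sum_congr rfl
      intro j hj
      have hj3 : 3 ≤ j := (Finset.mem_Icc.mp hj).1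
      rw [if_pos (by omega), if_pos (by omega), hy1, hyk j hj3]
      ring
    have ht2 : ∑ j ∈ Finset.Icc 3 n, ((if 2 < j then y 2 * y j ^ 2 else 0) -
        (if 2 < j then x 2 * x j ^ 2 else 0)) = ∑ j ∈ Finset.Icc 3 n, (x j ^ 2) := by
      apply Finset.sum_congr rfl
      intro j hj
      have hj3 : 3 ≤ j := (Finset.mem_Icc.mp hj).1
      rw [if_pos (by omega), if_pos (by omega), hy2, hyk j hj3]
      ring
    rw [ht1, ht2, hy1, hy2]
    have hcancel : ∑ j ∈ Finset.Icc 3 n, (- (x j ^ 2)) + ∑ j ∈ Finset.Icc 3 n, (x j ^ 2) = 0 := by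
      rw [← Finset.sum_add_distrib]
      apply Finset.sum_eq_zero
      intro j _
      ring
    linarith [hcancel]
  have hle := hmax y hyA
  nlinarith [hx2, hcon, hdiff, hle]
end

section
/- Let n ≥ 2 and let (x_1,…,x_n) be a weakly decreasing sequence of nonnegative reals with Σ_{i=1}^n x_i ≤ 6n − 12. If additionally x_2 ≤ n/18, then S_n(x_1,…,x_n) = Σ_{i<j} x_i x_j² ≤ (6n−12)² · n / 36 ≤ n³. -/
/-- `S n x = Σ_{1 ≤ i < j ≤ n} x_i · x_j²` for real sequences indexed from 1. -/
def SpolyR (n : ℕ) (x : ℕ → ℝ) : ℝ :=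
  ∑ i ∈ Finset.Icc 1 n, ∑ j ∈ Finset.Icc 1 n, if i < j then x i * x j ^ 2 else 0

/-- If `x_1 ≥ ⋯ ≥ x_n ≥ 0` are reals with `Σ x_i ≤ 6n − 12` and `x_2 ≤ n/18`, then
`S_n(x) ≤ (6n − 12)²·n/36 ≤ n³`. -/
theorem stmt_7 (n : ℕ) (hn : 2 ≤ n) (x : ℕ → ℝ)
    (hdec : ∀ i, 1 ≤ i → i < n → x (i + 1) ≤ x i) (hpos : 0 ≤ x n)
    (hsum : ∑ i ∈ Finset.Icc 1 n, x i ≤ 6 * (n : ℝ) - 12)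
    (hx2 : x 2 ≤ (n : ℝ) / 18) :
    SpolyR n x ≤ (6 * (n : ℝ) - 12) ^ 2 * n / 36 ∧
      (6 * (n : ℝ) - 12) ^ 2 * n / 36 ≤ (n : ℝ) ^ 3 := by
  set s := Finset.Icc 1 n with hs
  -- monotonicity
  have mono : ∀ i j, 1 ≤ i → i ≤ j → j ≤ n → x j ≤ x i := by
    intro i j hi hij
    induction j, hij using Nat.le_induction with
    | base => intro _; exact le_refl _
    | succ j hj ih =>
      intro hjn
      have h1 : x (j + 1) ≤ x j := hdec j (le_trans hi hj) (by omega)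
      exact le_trans h1 (ih (by omega))
  have nonneg : ∀ i ∈ s, 0 ≤ x i := by
    intro i hi
    simp only [hs, Finset.mem_Icc] at hi
    exact le_trans hpos (mono i n hi.1 hi.2 le_rfl)
  set T := ∑ i ∈ s, x i with hT
  have hT0 : 0 ≤ T := Finset.sum_nonneg nonneg
  set P := ∑ i ∈ s, ∑ j ∈ s, if i < j then x i * x j else 0 with hP
  have hP0 : 0 ≤ P := by
    apply Finset.sum_nonneg; intro i hi
    apply Finset.sum_nonneg; intro j hj
    split
    · exact mul_nonneg (nonneg i hi) (nonneg j hj)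
    · exact le_rfl
  -- 2P ≤ T^2
  have key : 2 * P ≤ T ^ 2 := by
    have hid : T ^ 2 = ∑ i ∈ s, ∑ j ∈ s, x i * x j := by
      rw [sq, Finset.sum_mul_sum]
    have hsplit : (∑ i ∈ s, ∑ j ∈ s, x i * x j) =
        (∑ i ∈ s, ∑ j ∈ s, if i < j then x i * x j else 0)
        + (∑ i ∈ s, ∑ j ∈ s, if j < i then x i * x j else 0)
        + (∑ i ∈ s, ∑ j ∈ s, if i = j then x i * x j else 0) := by
      rw [← Finset.sum_add_distrib, ← Finset.sum_add_distrib]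
      apply Finset.sum_congr rfl; intro i _
      rw [← Finset.sum_add_distrib, ← Finset.sum_add_distrib]
      apply Finset.sum_congr rfl; intro j _
      rcases lt_trichotomy i j with h | h | h
      · simp [h, not_lt.mpr h.le, h.ne]
      · simp [h]
      · simp [h, not_lt.mpr h.le, h.ne']
    have hB : (∑ i ∈ s, ∑ j ∈ s, if j < i then x i * x j else 0) = P := by
      rw [Finset.sum_comm, hP]
      apply Finset.sum_congr rfl; intro i _
      apply Finset.sum_congr rfl; intro j _
      rcases lt_or_ge i j with h | h
      · simp [h, mul_comm]
      · simp [not_lt.mpr h]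
    have hC : 0 ≤ ∑ i ∈ s, ∑ j ∈ s, if i = j then x i * x j else 0 := by
      apply Finset.sum_nonneg; intro i hi
      apply Finset.sum_nonneg; intro j hj
      split
      · exact mul_nonneg (nonneg i hi) (nonneg j hj)
      · exact le_rfl
    rw [hid, hsplit, hB, ← hP]
    linarith
  -- S ≤ (n/18) * P
  have hS : SpolyR n x ≤ ((n : ℝ) / 18) * P := by
    rw [SpolyR, hP, Finset.mul_sum]
    apply Finset.sum_le_sum; intro i hi
    rw [Finset.mul_sum]
    apply Finset.sum_le_sum; intro j hj
    simp only [hs, Finset.mem_Icc] at hi hj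
    rcases lt_or_ge i j with h | h
    · simp only [h, if_true]
      have hj2 : x j ≤ x 2 := mono 2 j (by omega) (by omega) hj.2
      have hjn : 0 ≤ x j := le_trans hpos (mono j n hj.1 hj.2 le_rfl)
      have hin : 0 ≤ x i := le_trans hpos (mono i n hi.1 hi.2 le_rfl)
      have : x j ^ 2 ≤ ((n : ℝ) / 18) * x j := by
        rw [sq]
        apply mul_le_mul_of_nonneg_right _ hjn
        exact le_trans hj2 hx2
      calc x i * x j ^ 2 ≤ x i * (((n : ℝ) / 18) * x j) :=
            mul_le_mul_of_nonneg_left this hin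
        _ = ((n : ℝ) / 18) * (x i * x j) := by ring
    · simp [not_lt.mpr h]
  have hn2 : (2 : ℝ) ≤ (n : ℝ) := by exact_mod_cast hn
  have hT2 : T ^ 2 ≤ (6 * (n : ℝ) - 12) ^ 2 := by nlinarith
  constructor
  · nlinarith
  · nlinarith [sq_nonneg ((n : ℝ) - 2)]
end

section
/- For any nonnegative reals x_1 ≥ x_2 ≥ ⋯ ≥ x_n ≥ 0, one has Σ_{1 ≤ i < j ≤ n} x_i x_j² ≤ x_2 · (Σ_{i=1}^n x_i)² / 2. -/
/-- For nonnegative reals `x_1 ≥ x_2 ≥ ⋯ ≥ x_n ≥ 0`,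
`Σ_{i<j} x_i x_j² ≤ x_2 · (Σ x_i)² / 2`. -/
theorem stmt_8 (n : ℕ) (hn : 2 ≤ n) (x : ℕ → ℝ)
    (hdec : ∀ i, 1 ≤ i → i < n → x (i + 1) ≤ x i) (hpos : 0 ≤ x n) :
    SpolyR n x ≤ x 2 * (∑ i ∈ Finset.Icc 1 n, x i) ^ 2 / 2 := by
  -- monotonicity: 1 ≤ i ≤ j ≤ n → x j ≤ x i
  have hmono : ∀ i j, 1 ≤ i → i ≤ j → j ≤ n → x j ≤ x i := by
    intro i j hi hij hjn
    induction j with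
    | zero => omega
    | succ k ih =>
      rcases Nat.lt_or_ge i (k+1) with h | h
      · have hk : x (k+1) ≤ x k := hdec k (by omega) (by omega)
        exact hk.trans (ih (by omega) (by omega))
      · have : i = k + 1 := by omega
        simp [this]
  have hnn : ∀ i, 1 ≤ i → i ≤ n → 0 ≤ x i := fun i hi hin =>
    hpos.trans (hmono i n hi hin le_rfl)
  have hx2 : 0 ≤ x 2 := hnn 2 (by omega) hn
  set I := Finset.Icc 1 n with hI
  set T : ℝ := ∑ i ∈ I, ∑ j ∈ I, if i < j then x i * x j else 0 with hT
  set P : ℝ := ∑ i ∈ I, x i with hP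
  -- Step A : S ≤ x 2 * T
  have stepA : SpolyR n x ≤ x 2 * T := by
    rw [hT, Finset.mul_sum]
    unfold SpolyR
    apply Finset.sum_le_sum
    intro i hi
    rw [Finset.mul_sum]
    apply Finset.sum_le_sum
    intro j hj
    simp only [Finset.mem_Icc] at hi hj
    by_cases hij : i < j
    · simp only [hij, if_true, mul_ite, mul_zero]
      have hxj2 : x j ≤ x 2 := hmono 2 j (by omega) (by omega) hj.2
      have hxi : 0 ≤ x i := hnn i hi.1 hi.2
      have hxj : 0 ≤ x j := hnn j hj.1 hj.2
      calc x i * x j ^ 2 = (x i * x j) * x j := by ring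
        _ ≤ (x i * x j) * x 2 := by
            exact mul_le_mul_of_nonneg_left hxj2 (mul_nonneg hxi hxj)
        _ = x 2 * (x i * x j) := by ring
    · simp [hij]
  -- Step B : 2 * T ≤ P ^ 2
  have stepB : 2 * T ≤ P ^ 2 := by
    have hsym : T = ∑ i ∈ I, ∑ j ∈ I, if j < i then x i * x j else 0 := by
      rw [hT, Finset.sum_comm]
      congr 1; ext i; congr 1; ext j
      by_cases h : i < j <;> simp [h, mul_comm]
    have hexp : P ^ 2 = ∑ i ∈ I, ∑ j ∈ I, x i * x j := by
      rw [hP, sq, Finset.sum_mul_sum]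
    rw [hexp]
    have : 2 * T = T + T := by ring
    rw [this]
    nth_rewrite 2 [hsym]
    rw [hT, ← Finset.sum_add_distrib]
    apply Finset.sum_le_sum
    intro i hi
    rw [← Finset.sum_add_distrib]
    apply Finset.sum_le_sum
    intro j hj
    rw [hI] at hi hj
    simp only [Finset.mem_Icc] at hi hj
    have hxi : 0 ≤ x i := hnn i hi.1 hi.2
    have hxj : 0 ≤ x j := hnn j hj.1 hj.2
    rcases lt_trichotomy i j with h | h | h
    · simp [h, not_lt_of_gt h]
    · subst h; simpa using mul_nonneg hxi hxi
    · simp [h, not_lt_of_gt h]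
  -- combine
  have : x 2 * T ≤ x 2 * (P ^ 2 / 2) := by
    apply mul_le_mul_of_nonneg_left _ hx2
    linarith
  calc SpolyR n x ≤ x 2 * T := stepA
    _ ≤ x 2 * (P ^ 2 / 2) := this
    _ = x 2 * P ^ 2 / 2 := by ring
end

section
/- Let m ≥ 2 be an integer and let x_1 ≥ x_2 ≥ ⋯ ≥ x_m ≥ 0 be reals with total sum t = Σ_{i=1}^m x_i. Then Σ_{1 ≤ i < j ≤ m} x_i x_j² ≤ (t/2)³. -/
/-!
Since the `x_i` decrease, `x_i x_j² ≤ (x_i² x_j + x_i x_j²) / 2` for `i < j`, and the symmetrised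
sum is `½ Σ_i x_i² (t - x_i)`. Each term satisfies `x_i (t - x_i) ≤ t² / 4` (AM-GM), so the sum is
at most `½ · t²/4 · Σ_i x_i = (t/2)³`.
-/

open Finset

namespace Finset

variable {ι M : Type*} [LinearOrder ι] [AddCommGroup M]

theorem sum_sum_ite_lt_add_swap (s : Finset ι) (g : ι → ι → M) :
    ∑ i ∈ s, ∑ j ∈ s, (if i < j then g i j + g j i else 0) =
      ∑ i ∈ s, ∑ j ∈ s, g i j - ∑ i ∈ s, g i i := by
  have hsplit : ∀ i j, (if i < j then g i j + g j i else 0) =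
      (if i < j then g i j else 0) + (if i < j then g j i else 0) := by
    intro i j; split_ifs <;> simp
  have hdiag : ∀ i j, (if i < j then g i j else 0) + (if j < i then g i j else 0) =
      g i j - if i = j then g i j else 0 := by
    intro i j
    rcases lt_trichotomy i j with h | rfl | h
    · simp [h, h.not_gt, h.ne]
    · simp
    · simp [h, h.not_gt, h.ne']
  simp_rw [hsplit, sum_add_distrib]
  rw [sum_comm (f := fun i j => if i < j then g j i else 0), ← sum_add_distrib]
  simp_rw [← sum_add_distrib, hdiag, sum_sub_distrib, sum_ite_eq, ← sum_sub_distrib]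
  simp

end Finset

theorem sq_mul_sub_le_mul_sq_div_four {a t : ℝ} (ha : 0 ≤ a) : a ^ 2 * (t - a) ≤ a * (t ^ 2 / 4) := by
  nlinarith [mul_nonneg ha (sq_nonneg (t / 2 - a))]

theorem sum_sq_mul_sub_le {ι : Type*} (s : Finset ι) (f : ι → ℝ) (hf : ∀ i ∈ s, 0 ≤ f i) :
    ∑ i ∈ s, f i ^ 2 * (∑ j ∈ s, f j - f i) ≤ (∑ i ∈ s, f i) ^ 3 / 4 :=
  calc ∑ i ∈ s, f i ^ 2 * (∑ j ∈ s, f j - f i)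
      ≤ ∑ i ∈ s, f i * ((∑ j ∈ s, f j) ^ 2 / 4) :=
        sum_le_sum fun i hi => sq_mul_sub_le_mul_sq_div_four (hf i hi)
    _ = (∑ i ∈ s, f i) ^ 3 / 4 := by rw [← sum_mul]; ring

theorem sum_sum_ite_lt_mul_sq_le {ι : Type*} [LinearOrder ι] (s : Finset ι) (f : ι → ℝ)
    (hf : ∀ i ∈ s, 0 ≤ f i) (hanti : AntitoneOn f s) :
    ∑ i ∈ s, ∑ j ∈ s, (if i < j then f i * f j ^ 2 else 0) ≤ ((∑ i ∈ s, f i) / 2) ^ 3 := by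
  have hsym : ∑ i ∈ s, ∑ j ∈ s, (if i < j then f i ^ 2 * f j + f j ^ 2 * f i else 0) =
      ∑ i ∈ s, f i ^ 2 * (∑ j ∈ s, f j - f i) := by
    rw [sum_sum_ite_lt_add_swap (g := fun i j => f i ^ 2 * f j), ← sum_sub_distrib]
    simp_rw [mul_sub, mul_sum]
  have hterm : ∀ i ∈ s, ∀ j ∈ s, (if i < j then f i * f j ^ 2 else 0) ≤
      (if i < j then f i ^ 2 * f j + f j ^ 2 * f i else 0) / 2 := by
    intro i hi j hj
    split_ifs with hij
    · have hji : f j ≤ f i := hanti hi hj hij.le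
      nlinarith [mul_nonneg (mul_nonneg (hf i hi) (hf j hj)) (sub_nonneg.mpr hji)]
    · simp
  calc ∑ i ∈ s, ∑ j ∈ s, (if i < j then f i * f j ^ 2 else 0)
      ≤ ∑ i ∈ s, ∑ j ∈ s, (if i < j then f i ^ 2 * f j + f j ^ 2 * f i else 0) / 2 :=
        sum_le_sum fun i hi => sum_le_sum fun j hj => hterm i hi j hj
    _ ≤ ((∑ i ∈ s, f i) / 2) ^ 3 := by
        simp_rw [← sum_div]
        rw [hsym]
        linarith [sum_sq_mul_sub_le s f hf]

theorem stmt_12_general (m : ℕ) (x : ℕ → ℝ)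
    (hdec : ∀ i, 1 ≤ i → i < m → x (i + 1) ≤ x i) (hpos : 0 ≤ x m)
    (t : ℝ) (ht : t = ∑ i ∈ Finset.Icc 1 m, x i) :
    SpolyR m x ≤ (t / 2) ^ 3 := by
  have hanti : AntitoneOn x (Icc 1 m) := by
    rw [coe_Icc]
    refine antitoneOn_of_succ_le Set.ordConnected_Icc fun i _ hi hsi => ?_
    exact hdec i hi.1 (Nat.succ_le_iff.mp (Set.mem_Icc.mp hsi).2)
  have hnn : ∀ i ∈ Icc 1 m, 0 ≤ x i := by
    intro i hi
    have hm : m ∈ Icc 1 m := right_mem_Icc.mpr ((mem_Icc.mp hi).1.trans (mem_Icc.mp hi).2)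
    exact hpos.trans (hanti hi hm (mem_Icc.mp hi).2)
  rw [ht]
  exact sum_sum_ite_lt_mul_sq_le _ x hnn hanti

/-- For an integer `m ≥ 2` and reals `x_1 ≥ ⋯ ≥ x_m ≥ 0` with total sum `t`,
`Σ_{1 ≤ i < j ≤ m} x_i x_j² ≤ (t/2)³`. -/
theorem stmt_12 (m : ℕ) (hm : 2 ≤ m) (x : ℕ → ℝ)
    (hdec : ∀ i, 1 ≤ i → i < m → x (i + 1) ≤ x i) (hpos : 0 ≤ x m)
    (t : ℝ) (ht : t = ∑ i ∈ Finset.Icc 1 m, x i) :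
    SpolyR m x ≤ (t / 2) ^ 3 :=
  stmt_12_general m x hdec hpos t ht
end

section
/- There exists a constant C such that for every n ≥ 2 and every (x_1,…,x_n) ∈ A_n satisfying x_1 = n, one has S_n(x_1,…,x_n) ≤ n³ + C·n². (Indeed, x_1 = x_2 ∈ {n−1, n} forces x_3 ≤ 3 via the constraint x_1 + x_2 + x_3 ≤ 2n + 2.) -/
open Finset

section Abel

variable {R : Type*} [CommRing R] [LinearOrder R] [IsStrictOrderedRing R]

theorem sum_Icc_mul_le_of_antitoneOn {f d : ℕ → R} {a b : ℕ} {B : R} (hab : a ≤ b)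
    (hf : AntitoneOn f (Set.Icc a b)) (hfb : 0 ≤ f b)
    (hd : ∀ k ∈ Set.Icc a b, ∑ i ∈ Icc a k, d i ≤ B) :
    ∑ i ∈ Icc a b, f i * d i ≤ B * f a := by
  have key : ∀ m, a ≤ m → m ≤ b →
      ∑ i ∈ Icc a m, f i * d i ≤ f m * (∑ i ∈ Icc a m, d i - B) + B * f a := by
    intro m ham
    induction m, ham using Nat.le_induction with
    | base => intro; simp only [Icc_self, sum_singleton]; exact le_of_eq (by ring)
    | succ m ham ih =>
      intro hmb
      have hstep : (f m - f (m + 1)) * (∑ i ∈ Icc a m, d i - B) ≤ 0 :=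
        mul_nonpos_of_nonneg_of_nonpos
          (sub_nonneg.2 (hf ⟨ham, by omega⟩ ⟨by omega, hmb⟩ (Nat.le_succ m)))
          (sub_nonpos.2 (hd m ⟨ham, by omega⟩))
      rw [sum_Icc_succ_top (by omega), sum_Icc_succ_top (by omega)]
      linear_combination ih (by omega) + hstep
  calc ∑ i ∈ Icc a b, f i * d i ≤ f b * (∑ i ∈ Icc a b, d i - B) + B * f a := key b hab le_rfl
    _ ≤ B * f a := by
      linarith [mul_nonpos_of_nonneg_of_nonpos hfb (sub_nonpos.2 (hd b ⟨hab, le_rfl⟩))]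

end Abel

theorem sum_Icc_one_eq_add_add {M : Type*} [AddCommMonoid M] (f : ℕ → M) {k : ℕ} (hk : 2 ≤ k) :
    ∑ i ∈ Icc 1 k, f i = f 1 + f 2 + ∑ i ∈ Icc 3 k, f i := by
  rw [← insert_Icc_add_one_left_eq_Icc (show 1 ≤ k by omega),
    ← insert_Icc_add_one_left_eq_Icc (show 1 + 1 ≤ k by omega), sum_insert (by simp),
    sum_insert (by simp), ← add_assoc]
  rfl

theorem natCast_mul_le_sum_Icc_of_antitoneOn {R : Type*} [Semiring R] [PartialOrder R]
    [IsOrderedRing R] {f : ℕ → R} {b : ℕ} (hf : AntitoneOn f (Set.Icc 1 b)) :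
    (b : R) * f b ≤ ∑ i ∈ Icc 1 b, f i := by
  rcases Nat.eq_zero_or_pos b with rfl | hb
  · simp
  have h := card_nsmul_le_sum (Icc 1 b) f (f b) fun i hi =>
    hf (coe_Icc 1 b ▸ hi) ⟨hb, le_rfl⟩ (mem_Icc.1 hi).2
  simpa [nsmul_eq_mul] using h

theorem Spoly_eq_sum_Icc (n : ℕ) (x : ℕ → ℤ) :
    Spoly n x = ∑ j ∈ Icc 1 n, (∑ i ∈ Icc 1 (j - 1), x i) * x j ^ 2 := by
  rw [Spoly, sum_comm]
  refine sum_congr rfl fun j hj => ?_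
  rw [← sum_filter, sum_mul]
  congr 1
  ext i
  simp only [mem_filter, mem_Icc] at hj ⊢
  omega

theorem Spoly_eq_of_two_le {n : ℕ} (hn : 2 ≤ n) (x : ℕ → ℤ) :
    Spoly n x = x 1 * x 2 ^ 2 + ∑ j ∈ Icc 3 n, (∑ i ∈ Icc 1 (j - 1), x i) * x j ^ 2 := by
  simp [Spoly_eq_sum_Icc, sum_Icc_one_eq_add_add _ hn]

namespace memA

variable {n : ℕ} {x : ℕ → ℤ}

theorem antitoneOn (hA : memA n x) : AntitoneOn x (Set.Icc 1 n) :=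
  antitoneOn_of_add_one_le Set.ordConnected_Icc fun i _ hi hi' => hA.2.1 i hi.1 hi'.2

theorem sum_Icc_le (hA : memA n x) {k : ℕ} (hk1 : 1 ≤ k) (hkn : k ≤ n) :
    ∑ i ∈ Icc 1 k, x i ≤ 2 * n + 6 * k - 16 :=
  hA.2.2.2.1 k hk1 hkn

theorem nonneg (hA : memA n x) {i : ℕ} (hi : i ∈ Set.Icc 1 n) : 0 ≤ x i :=
  hA.2.2.1.trans (hA.antitoneOn hi ⟨hi.1.trans hi.2, le_rfl⟩ hi.2)

theorem sum_Icc_three_le (hA : memA n x) (hx1 : x 1 = n) {k : ℕ} (hk2 : 2 ≤ k) (hkn : k ≤ n) :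
    ∑ i ∈ Icc 3 k, x i ≤ n - x 2 + 6 * k - 16 := by
  have h := hA.sum_Icc_le (by omega) hkn
  rw [sum_Icc_one_eq_add_add _ hk2, hx1] at h
  linarith

theorem sum_Icc_three_le_five_mul (hA : memA n x) (hx1 : x 1 = n) (hn : 2 ≤ n) :
    ∑ i ∈ Icc 3 n, x i ≤ 5 * n := by
  have h := hA.2.2.2.2
  rw [sum_Icc_one_eq_add_add _ hn, hx1] at h
  linarith [hA.nonneg (i := 2) ⟨by omega, hn⟩]

theorem x_two_mem_Icc (hA : memA n x) (hx1 : x 1 = n) (hn : 2 ≤ n) : x 2 ∈ Set.Icc 0 (n : ℤ) :=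
  ⟨hA.nonneg ⟨by norm_num, hn⟩,
    hx1 ▸ hA.antitoneOn ⟨le_rfl, by omega⟩ ⟨by norm_num, hn⟩ (by norm_num)⟩

theorem sum_sq_Icc_three_le (hA : memA n x) (hx1 : x 1 = n) (hn : 2 ≤ n) :
    ∑ j ∈ Icc 3 n, x j ^ 2 ≤ (n - x 2) * x 2 + 6 * ∑ j ∈ Icc 3 n, x j := by
  obtain ⟨ha0, han⟩ := hA.x_two_mem_Icc hx1 hn
  obtain rfl | hn3 : n = 2 ∨ 3 ≤ n := by omega
  · simpa using mul_nonneg (sub_nonneg.2 han) ha0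
  have hanti : AntitoneOn x (Set.Icc 3 n) :=
    hA.antitoneOn.mono (Set.Icc_subset_Icc (by norm_num) le_rfl)
  have habel := sum_Icc_mul_le_of_antitoneOn (d := fun j => x j - 6) (B := n - x 2) hn3 hanti
    (hA.nonneg ⟨by omega, le_rfl⟩) fun k ⟨hk3, hkn⟩ => by
      have hcard : ((Icc 3 k).card : ℤ) = k - 2 := by rw [Nat.card_Icc]; omega
      rw [sum_sub_distrib, sum_const, nsmul_eq_mul, hcard]
      linarith [hA.sum_Icc_three_le hx1 (by omega) hkn]
  have hx3 : (n - x 2) * x 3 ≤ (n - x 2) * x 2 :=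
    mul_le_mul_of_nonneg_left (hA.antitoneOn ⟨by norm_num, by omega⟩ ⟨by norm_num, hn3⟩
      (by norm_num)) (sub_nonneg.2 han)
  simp only [mul_sub, sum_sub_distrib, ← sum_mul] at habel
  simp only [sq]
  linarith

theorem sum_Icc_mul_sq_le (hA : memA n x) {j : ℕ} (hj : j ∈ Set.Icc 3 n) :
    (∑ i ∈ Icc 1 (j - 1), x i) * x j ^ 2 ≤ 2 * n * x j ^ 2 + 48 * n * x j := by
  obtain ⟨hj3, hjn⟩ := hj
  have hprev := hA.sum_Icc_le (k := j - 1) (by omega) (by omega)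
  rw [Nat.cast_sub (by omega : 1 ≤ j)] at hprev
  have hjx : (j : ℤ) * x j ≤ 8 * n := by
    have hP := hA.sum_Icc_le (by omega) hjn
    have hjP := natCast_mul_le_sum_Icc_of_antitoneOn
      (hA.antitoneOn.mono (Set.Icc_subset_Icc le_rfl hjn))
    have hjn' : (j : ℤ) ≤ n := by exact_mod_cast hjn
    linarith
  have hx0 := hA.nonneg ⟨by omega, hjn⟩
  nlinarith [mul_nonneg hx0 hx0]

end memA

/-- There is a constant `C` such that for every `n ≥ 2` and every `(x_1,…,x_n) ∈ A_n`
with `x_1 = n`, one has `S_n(x) ≤ n³ + C·n²`. -/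
theorem stmt_14 :
    ∃ C : ℤ, ∀ n : ℕ, 2 ≤ n → ∀ x : ℕ → ℤ, memA n x → x 1 = (n : ℤ) →
      Spoly n x ≤ (n : ℤ) ^ 3 + C * (n : ℤ) ^ 2 := by
  refine ⟨300, fun n hn x hA hx1 => ?_⟩
  have htail : ∑ j ∈ Icc 3 n, (∑ i ∈ Icc 1 (j - 1), x i) * x j ^ 2 ≤
      2 * n * ∑ j ∈ Icc 3 n, x j ^ 2 + 48 * n * ∑ j ∈ Icc 3 n, x j := by
    rw [mul_sum, mul_sum, ← sum_add_distrib]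
    exact sum_le_sum fun j hj => hA.sum_Icc_mul_sq_le (coe_Icc 3 n ▸ hj)
  have hsq := hA.sum_sq_Icc_three_le hx1 hn
  have hsum := hA.sum_Icc_three_le_five_mul hx1 hn
  have hn0 : (0 : ℤ) ≤ n := by positivity
  rw [Spoly_eq_of_two_le hn, hx1]
  nlinarith [mul_le_mul_of_nonneg_left hsq (by positivity : (0 : ℤ) ≤ 2 * n),
    mul_le_mul_of_nonneg_left hsum hn0, mul_nonneg hn0 (sq_nonneg ((n : ℤ) - x 2))]
end

section
/- There exists a constant C such that for every n ≥ 2 and every sequence (x_1,…,x_n) ∈ A_n maximizing S_n over A_n, at least one of the following holds: (i) x_1 = n; (ii) x_2 ≤ n/18; or (iii) there exists k ≤ 11664 such that x_i ≤ 6 for all i > k. -/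
lemma memA_mono {n : ℕ} {x : ℕ → ℤ} (hx : memA n x) :
    ∀ i j, 1 ≤ i → i ≤ j → j ≤ n → x j ≤ x i := by
  obtain ⟨-, hmono, -, -, -⟩ := hx
  intro i j hi hij hjn
  induction j with
  | zero => omega
  | succ k ih =>
    rcases Nat.lt_or_ge i (k+1) with h | h
    · exact le_trans (hmono k (by omega) (by omega)) (ih (by omega) (by omega))
    · have : i = k + 1 := by omega
      rw [this]

lemma memA_nonneg {n : ℕ} {x : ℕ → ℤ} (hx : memA n x) :
    ∀ i, 1 ≤ i → i ≤ n → 0 ≤ x i :=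
  fun i h1 h2 => le_trans hx.2.2.1 (memA_mono hx i n h1 h2 le_rfl)

lemma sum_Icc_split (x : ℕ → ℤ) (k m : ℕ) (h : k ≤ m) :
    ∑ i ∈ Finset.Icc 1 m, x i = (∑ i ∈ Finset.Icc 1 k, x i) + ∑ i ∈ Finset.Ioc k m, x i := by
  have hIcc : ∀ s : ℕ, ∑ i ∈ Finset.Icc 1 s, x i = ∑ i ∈ Finset.Ioc 0 s, x i := by
    intro s
    exact Finset.sum_congr (by ext i; simp only [Finset.mem_Icc, Finset.mem_Ioc]; omega)
      (fun _ _ => rfl)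
  rw [hIcc, hIcc, ← Finset.sum_Ioc_consecutive _ (Nat.zero_le k) h]

lemma sum_Ioc_ge (x : ℕ → ℤ) (k m : ℕ) (c : ℤ) (hc : 0 ≤ c) (h : ∀ i, k < i → i ≤ m → c ≤ x i) :
    ((m : ℤ) - k) * c ≤ ∑ i ∈ Finset.Ioc k m, x i := by
  rcases le_or_gt k m with hkm | hkm
  · have h1 : ∑ i ∈ Finset.Ioc k m, c ≤ ∑ i ∈ Finset.Ioc k m, x i := by
      refine Finset.sum_le_sum fun i hi => ?_
      rw [Finset.mem_Ioc] at hi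
      exact h i hi.1 hi.2
    rw [Finset.sum_const, Nat.card_Ioc, nsmul_eq_mul] at h1
    have : ((m - k : ℕ) : ℤ) = (m : ℤ) - k := by omega
    rw [this] at h1
    exact h1
  · have : Finset.Ioc k m = ∅ := by
      rw [Finset.Ioc_eq_empty_iff]; omega
    rw [this]
    simp only [Finset.sum_empty]
    have h2 : (m:ℤ) - k ≤ 0 := by omega
    nlinarith
lemma sum_update (p m : ℕ) (x : ℕ → ℤ) (hp : 1 ≤ p) (hpm : p < m) (s : ℕ) :
    ∑ i ∈ Finset.Icc 1 s, (x i + (if i = p then 1 else 0) + (if i = m then (-1:ℤ) else 0))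
      = (∑ i ∈ Finset.Icc 1 s, x i) + (if p ≤ s then 1 else 0) + (if m ≤ s then (-1:ℤ) else 0) := by
  rw [Finset.sum_add_distrib, Finset.sum_add_distrib, Finset.sum_ite_eq' _ p (fun _ => (1:ℤ)),
    Finset.sum_ite_eq' _ m (fun _ => (-1:ℤ))]
  have h1 : (if p ∈ Finset.Icc 1 s then (1:ℤ) else 0) = (if p ≤ s then 1 else 0) := by
    by_cases h : p ≤ s <;> simp [Finset.mem_Icc, h, hp]
  have h2 : (if m ∈ Finset.Icc 1 s then (-1:ℤ) else 0) = (if m ≤ s then (-1:ℤ) else 0) := by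
    by_cases h : m ≤ s <;> simp [Finset.mem_Icc, h] <;> omega
  rw [h1, h2]

lemma memA_update (n p m : ℕ) (x : ℕ → ℤ) (hx : memA n x)
    (hp1 : 1 ≤ p) (hp2 : p ≤ 2) (hm : 11664 < m) (hmn : m ≤ n)
    (hcap : p = 1 → x 1 + 1 ≤ (n:ℤ))
    (hprev : p = 2 → x 2 + 1 ≤ x 1)
    (hm7 : 7 ≤ x m)
    (hafter : ∀ j, m < j → j ≤ n → x j ≤ 6) :
    memA n (fun i => x i + (if i = p then 1 else 0) + (if i = m then (-1:ℤ) else 0)) := by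
  have mono := memA_mono hx
  obtain ⟨hx1, hmono, hxn, hpart, htot⟩ := hx
  have hge7 : ∀ i, 1 ≤ i → i ≤ m → (7:ℤ) ≤ x i := fun i h1 h2 =>
    le_trans hm7 (mono i m h1 h2 hmn)
  have hslack : ∀ k, 1 ≤ k → k < m →
      (∑ i ∈ Finset.Icc 1 k, x i) + 1 ≤ 2 * (n:ℤ) + 6 * (k:ℤ) - 16 := by
    intro k hk1 hkm
    have hsp := sum_Icc_split x k m (le_of_lt hkm)
    have h7 : ((m:ℤ) - k) * 7 ≤ ∑ i ∈ Finset.Ioc k m, x i :=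
      sum_Ioc_ge x k m 7 (by norm_num) (fun i hi1 hi2 => hge7 i (by omega) hi2)
    have hpm := hpart m (by omega) hmn
    have hcast : (k:ℤ) + 1 ≤ (m:ℤ) := by omega
    have hcast2 : (m:ℤ) ≤ (n:ℤ) := by omega
    linarith
  refine ⟨?_, ?_, ?_, ?_, ?_⟩
  · -- x 1 bound
    show x 1 + (if 1 = p then 1 else 0) + (if 1 = m then (-1:ℤ) else 0) ≤ (n:ℤ)
    rw [if_neg (by omega : ¬ (1 = m))]
    by_cases hp : 1 = p
    · rw [if_pos hp]
      have := hcap hp.symm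
      linarith
    · rw [if_neg hp]
      linarith
  · -- monotone
    intro i hi hin
    show x (i+1) + (if i+1 = p then 1 else 0) + (if i+1 = m then (-1:ℤ) else 0)
      ≤ x i + (if i = p then 1 else 0) + (if i = m then (-1:ℤ) else 0)
    by_cases h1 : i + 1 = p
    · have hp2' : p = 2 := by omega
      have hi1 : i = 1 := by omega
      rw [if_pos h1, if_neg (by omega : ¬ (i+1 = m)), if_neg (by omega : ¬ (i = p)),
        if_neg (by omega : ¬ (i = m)), hi1]
      have h := hprev hp2'
      simp only [show (1:ℕ)+1 = 2 from rfl]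
      linarith
    · by_cases h2 : i = p
      · rw [if_neg h1, if_pos h2, if_neg (by omega : ¬ (i+1 = m)), if_neg (by omega : ¬ (i = m))]
        have := hmono i hi hin
        linarith
      · by_cases h3 : i + 1 = m
        · rw [if_neg h1, if_neg h2, if_pos h3, if_neg (by omega : ¬ (i = m))]
          have := hmono i hi hin
          linarith
        · by_cases h4 : i = m
          · rw [if_neg h1, if_neg h2, if_neg h3, if_pos h4]
            have h5 := hafter (i+1) (by omega) (by omega)
            have h6 : (7:ℤ) ≤ x i := by rw [h4]; exact hm7
            linarith
          · rw [if_neg h1, if_neg h2, if_neg h3, if_neg h4]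
            have := hmono i hi hin
            linarith
  · -- nonneg at n
    show (0:ℤ) ≤ x n + (if n = p then 1 else 0) + (if n = m then (-1:ℤ) else 0)
    rw [if_neg (by omega : ¬ (n = p))]
    by_cases h : n = m
    · rw [if_pos h]
      have : (7:ℤ) ≤ x n := by rw [h]; exact hm7
      linarith
    · rw [if_neg h]
      linarith
  · -- partial sums
    intro k hk1 hkn
    have := sum_update p m x hp1 (by omega) k
    show (∑ i ∈ Finset.Icc 1 k, (x i + (if i = p then 1 else 0) + (if i = m then (-1:ℤ) else 0)))
      ≤ 2 * (n:ℤ) + 6 * (k:ℤ) - 16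
    rw [this]
    rcases le_or_gt m k with hmk | hmk
    · rw [if_pos (by omega : p ≤ k), if_pos hmk]
      have := hpart k hk1 hkn
      linarith
    · rw [if_neg (by omega : ¬ (m ≤ k))]
      rcases le_or_gt p k with hpk | hpk
      · rw [if_pos hpk]
        have := hslack k hk1 hmk
        linarith
      · rw [if_neg (by omega : ¬ (p ≤ k))]
        have hk1' : k = 1 := by omega
        have : ∑ i ∈ Finset.Icc 1 k, x i = x 1 := by
          rw [hk1', Finset.Icc_self, Finset.sum_singleton]
        rw [this, hk1']
        have hn10 : (10:ℤ) ≤ (n:ℤ) := by omega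
        push_cast
        linarith
  · -- total
    show (∑ i ∈ Finset.Icc 1 n, (x i + (if i = p then 1 else 0) + (if i = m then (-1:ℤ) else 0)))
      ≤ 6 * (n:ℤ) - 12
    rw [sum_update p m x hp1 (by omega) n, if_pos (by omega : p ≤ n), if_pos hmn]
    linarith
lemma Spoly_eq (n : ℕ) (x : ℕ → ℤ) :
    Spoly n x = ∑ j ∈ Finset.Icc 1 n, (∑ i ∈ Finset.Icc 1 (j-1), x i) * x j ^ 2 := by
  unfold Spoly
  rw [Finset.sum_comm]
  refine Finset.sum_congr rfl fun j hj => ?_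
  rw [Finset.mem_Icc] at hj
  rw [← Finset.sum_filter]
  have : (Finset.Icc 1 n).filter (· < j) = Finset.Icc 1 (j-1) := by
    ext i; simp [Finset.mem_Icc, Finset.mem_filter]; omega
  rw [this, Finset.sum_mul]

lemma Spoly_update (n p m : ℕ) (x : ℕ → ℤ) (hp : 1 ≤ p) (hpm : p + 1 < m) (hmn : m ≤ n) :
    Spoly n (fun i => x i + (if i = p then 1 else 0) + (if i = m then (-1:ℤ) else 0))
      = Spoly n x + (∑ i ∈ Finset.Icc 1 (p-1), x i) * (2 * x p + 1)
        + (∑ j ∈ Finset.Ioc p (m-1), (x j)^2)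
        + (((∑ i ∈ Finset.Icc 1 (m-1), x i) + 1) * (x m - 1)^2
           - (∑ i ∈ Finset.Icc 1 (m-1), x i) * (x m)^2) := by
  set y : ℕ → ℤ := fun i => x i + (if i = p then 1 else 0) + (if i = m then (-1:ℤ) else 0) with hy
  rw [Spoly_eq, Spoly_eq]
  have hIcc : ∀ f : ℕ → ℤ, ∑ j ∈ Finset.Icc 1 n, f j = ∑ j ∈ Finset.Ioc 0 n, f j := by
    intro f; exact Finset.sum_congr (by ext i; simp only [Finset.mem_Icc, Finset.mem_Ioc]; omega) (fun _ _ => rfl)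
  have hsplit : ∀ f : ℕ → ℤ, ∑ j ∈ Finset.Ioc 0 n, f j
      = ((∑ j ∈ Finset.Ioc 0 (p-1), f j) + f p) + (∑ j ∈ Finset.Ioc p (m-1), f j)
        + (f m + ∑ j ∈ Finset.Ioc m n, f j) := by
    intro f
    have e1 : Finset.Ioc (p-1) p = {p} := by ext i; simp only [Finset.mem_Ioc, Finset.mem_singleton]; omega
    have e2 : Finset.Ioc (m-1) m = {m} := by ext i; simp only [Finset.mem_Ioc, Finset.mem_singleton]; omega
    rw [← Finset.sum_Ioc_consecutive _ (Nat.zero_le (m:ℕ)) hmn,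
        ← Finset.sum_Ioc_consecutive _ (by omega : 0 ≤ m-1) (by omega : m-1 ≤ m),
        ← Finset.sum_Ioc_consecutive _ (by omega : 0 ≤ p) (by omega : p ≤ m-1),
        ← Finset.sum_Ioc_consecutive _ (by omega : 0 ≤ p-1) (by omega : p-1 ≤ p),
        e1, e2, Finset.sum_singleton, Finset.sum_singleton]
    ring
  rw [hIcc, hIcc, hsplit, hsplit]
  have hpre : ∀ j : ℕ, ∑ i ∈ Finset.Icc 1 (j-1), y i
      = (∑ i ∈ Finset.Icc 1 (j-1), x i) + (if p ≤ j-1 then 1 else 0) + (if m ≤ j-1 then (-1:ℤ) else 0) :=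
    fun j => sum_update p m x hp (by omega) (j-1)
  have hy1 : ∀ j, j ≠ p → j ≠ m → y j = x j := by intro j h1 h2; simp [hy, h1, h2]
  have P1 : ∑ j ∈ Finset.Ioc 0 (p-1), (∑ i ∈ Finset.Icc 1 (j-1), y i) * y j ^ 2
      = ∑ j ∈ Finset.Ioc 0 (p-1), (∑ i ∈ Finset.Icc 1 (j-1), x i) * x j ^ 2 := by
    refine Finset.sum_congr rfl fun j hj => ?_
    rw [Finset.mem_Ioc] at hj
    rw [hpre, hy1 j (by omega) (by omega), if_neg (by omega), if_neg (by omega)]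
    ring
  have P2 : (∑ i ∈ Finset.Icc 1 (p-1), y i) * y p ^ 2
      = (∑ i ∈ Finset.Icc 1 (p-1), x i) * x p ^ 2
        + (∑ i ∈ Finset.Icc 1 (p-1), x i) * (2 * x p + 1) := by
    rw [hpre, if_neg (by omega), if_neg (by omega)]
    have : y p = x p + 1 := by simp [hy]; omega
    rw [this]; ring
  have P3 : ∑ j ∈ Finset.Ioc p (m-1), (∑ i ∈ Finset.Icc 1 (j-1), y i) * y j ^ 2
      = ∑ j ∈ Finset.Ioc p (m-1), ((∑ i ∈ Finset.Icc 1 (j-1), x i) * x j ^ 2 + (x j)^2) := by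
    refine Finset.sum_congr rfl fun j hj => ?_
    rw [Finset.mem_Ioc] at hj
    rw [hpre, hy1 j (by omega) (by omega), if_pos (by omega), if_neg (by omega)]
    ring
  have P4 : (∑ i ∈ Finset.Icc 1 (m-1), y i) * y m ^ 2
      = ((∑ i ∈ Finset.Icc 1 (m-1), x i) + 1) * (x m - 1)^2 := by
    rw [hpre, if_pos (by omega), if_neg (by omega)]
    have : y m = x m - 1 := by simp [hy]; omega
    rw [this]; ring
  have P5 : ∑ j ∈ Finset.Ioc m n, (∑ i ∈ Finset.Icc 1 (j-1), y i) * y j ^ 2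
      = ∑ j ∈ Finset.Ioc m n, (∑ i ∈ Finset.Icc 1 (j-1), x i) * x j ^ 2 := by
    refine Finset.sum_congr rfl fun j hj => ?_
    rw [Finset.mem_Ioc] at hj
    rw [hpre, hy1 j (by omega) (by omega), if_pos (by omega), if_pos (by omega)]
    ring
  rw [P1, P2, P3, P4, P5, Finset.sum_add_distrib]
  ring
lemma arithB (s b T n : ℤ) (hb7 : 7 ≤ b) (hs1 : 1 ≤ s) (hT0 : 0 ≤ T)
    (hE2 : T + b ≤ 6*n - 12) (hs18 : n + 1 ≤ 18*s) (c3 : 11663*b ≤ 106*s - 18)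
    (hkey : s^2 + b*(T - s - s) + ((T+1)*(b-1)^2 - T*b^2) ≤ 0) : False := by
  have c1 : (0:ℤ) ≤ (b - 1) * (6*n - 12 - b - T) := mul_nonneg (by linarith) (by linarith)
  have c2 : (0:ℤ) ≤ (b - 1) * (108*s - 18 - (6*n - 12)) := mul_nonneg (by linarith) (by linarith)
  have c4 : (0:ℤ) ≤ s * (106*s - 18 - 11663*b) := mul_nonneg (by linarith) (by linarith)
  nlinarith [hkey, c1, c2, c4, hb7, hs1, sq_nonneg (b-1), sq_nonneg b]

lemma arithA (a s b T n : ℤ) (hb7 : 7 ≤ b) (hs1 : 1 ≤ s) (hT0 : 0 ≤ T) (has : s + 1 ≤ a)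
    (hE2 : T + b ≤ 6*n - 12) (hs18 : n + 1 ≤ 18*s) (c3A : 11663*b ≤ 6*n - 13 - 2*s)
    (hn2 : (0:ℤ) ≤ 6*n - 12)
    (hkey : a*(2*s+1) + ((T+1)*(b-1)^2 - T*b^2) ≤ 0) : False := by
  have d1 : (0:ℤ) ≤ (2*b - 1) * (6*n - 12 - b - T) := mul_nonneg (by linarith) (by linarith)
  have e1 : (s + 1) * (2*s + 1) + (b - 1)^2 ≤ (2*b - 1) * T := by
    nlinarith [hkey, mul_nonneg (by linarith : (0:ℤ) ≤ a - (s + 1)) (by linarith : (0:ℤ) ≤ 2*s + 1)]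
  have e2 : (2*b - 1) * T ≤ 2*b*(6*n - 12) := by nlinarith [d1, hb7, hn2]
  have e3 : 11663 * (2*b*(6*n - 12)) ≤ (12*n - 26 - 4*s) * (6*n - 12) := by
    have h : 11663 * (2*b) ≤ 12*n - 26 - 4*s := by linarith
    nlinarith [h, hn2]
  have e4 : (12*n - 26 - 4*s) * (6*n - 12) ≤ (212*s - 38) * (108*s - 18) := by
    have d5 : (0:ℤ) ≤ (18*s - 1 - n) * (6*n - 12) := mul_nonneg (by linarith) hn2
    have d6 : (0:ℤ) ≤ (212*s - 38) * (108*s - 18 - (6*n - 12)) :=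
      mul_nonneg (by linarith) (by linarith)
    nlinarith [d5, d6]
  nlinarith [e1, e2, e3, e4, hs1, sq_nonneg (b-1)]

/-- If `(x_1,…,x_n) ∈ A_n` maximizes `S_n` over `A_n`, then either `x_1 = n`, or
`x_2 ≤ n/18`, or there is `k ≤ 11664` with `x_i ≤ 6` for all `i > k`. -/
theorem stmt_16 (n : ℕ) (hn : 2 ≤ n) (x : ℕ → ℤ) (hx : memA n x)
    (hmax : ∀ y : ℕ → ℤ, memA n y → Spoly n y ≤ Spoly n x) :
    x 1 = (n : ℤ) ∨ (x 2 : ℝ) ≤ (n : ℝ) / 18 ∨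
      ∃ k ≤ 11664, ∀ i, k < i → i ≤ n → x i ≤ 6 := by
  by_cases h1 : x 1 = (n : ℤ)
  · exact Or.inl h1
  by_cases h2 : (x 2 : ℝ) ≤ (n : ℝ) / 18
  · exact Or.inr (Or.inl h2)
  refine Or.inr (Or.inr ?_)
  by_contra hcon
  push_neg at hcon
  obtain ⟨i₀, hi₀1, hi₀2, hi₀3⟩ := hcon 11664 le_rfl
  classical
  set m := Nat.findGreatest (fun j => 7 ≤ x j) n with hmdef
  have hi₀m : i₀ ≤ m := Nat.le_findGreatest hi₀2 (by omega)
  have hm : 11664 < m := by omega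
  have hmn : m ≤ n := Nat.findGreatest_le n
  have hm7 : 7 ≤ x m := Nat.findGreatest_of_ne_zero hmdef.symm (by omega)
  have hafter : ∀ j, m < j → j ≤ n → x j ≤ 6 := by
    intro j hj1 hj2
    have := Nat.findGreatest_is_greatest (P := fun j => 7 ≤ x j) (by omega) hj2
    omega
  have mono := memA_mono hx
  have nonneg := memA_nonneg hx
  -- basic quantities and facts
  have hs18 : (n:ℤ) + 1 ≤ 18 * x 2 := by
    push_neg at h2
    have h3 : (n:ℝ) < 18 * (x 2 : ℝ) := by
      have := (div_lt_iff₀ (by norm_num : (0:ℝ) < 18)).mp h2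
      linarith
    have h4 : (n:ℤ) < 18 * x 2 := by exact_mod_cast h3
    omega
  have ha : x 1 ≤ (n:ℤ) - 1 := by
    have := hx.1
    omega
  have hsa : x 2 ≤ x 1 := mono 1 2 le_rfl (by omega) (by omega)
  have hs1 : (1:ℤ) ≤ x 2 := by omega
  have hb7 : (7:ℤ) ≤ x m := hm7
  have hm2 : (11663:ℤ) ≤ (m:ℤ) - 2 := by omega
  set T := ∑ i ∈ Finset.Icc 1 (m-1), x i with hTdef
  have hT0 : (0:ℤ) ≤ T := Finset.sum_nonneg fun i hi => by
    rw [Finset.mem_Icc] at hi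
    exact nonneg i hi.1 (by omega)
  have hIocm : Finset.Ioc (m-1) m = {m} := by
    ext i; simp only [Finset.mem_Ioc, Finset.mem_singleton]; omega
  have hE1 : ∑ i ∈ Finset.Icc 1 m, x i = T + x m := by
    rw [sum_Icc_split x (m-1) m (by omega), hIocm, Finset.sum_singleton]
  have hE2 : T + x m ≤ 6*(n:ℤ) - 12 := by
    rw [← hE1]
    have hsp := sum_Icc_split x m n hmn
    have htail : (0:ℤ) ≤ ∑ i ∈ Finset.Ioc m n, x i := by
      have := sum_Ioc_ge x m n 0 le_rfl (fun i hi1 hi2 => nonneg i (by omega) hi2)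
      linarith
    have := hx.2.2.2.2
    linarith
  have h12 : ∑ i ∈ Finset.Icc 1 2, x i = x 1 + x 2 := by
    have : Finset.Icc 1 2 = {1, 2} := by decide
    rw [this, Finset.sum_insert (by decide), Finset.sum_singleton]
  have hE3 : x 1 + x 2 + ((m:ℤ)-2) * x m ≤ T + x m := by
    rw [← hE1, sum_Icc_split x 2 m (by omega), h12]
    have hge := sum_Ioc_ge x 2 m (x m) (by linarith)
      (fun i hi1 hi2 => mono i m (by omega) hi2 hmn)
    push_cast at hge
    linarith
  have hE4 : ∑ i ∈ Finset.Ioc 2 (m-1), x i = T - x 1 - x 2 := by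
    have := sum_Icc_split x 2 (m-1) (by omega)
    rw [h12] at this
    rw [hTdef] at *
    linarith
  have hgainB : x m * (T - x 1 - x 2) ≤ ∑ j ∈ Finset.Ioc 2 (m-1), (x j)^2 := by
    rw [← hE4, Finset.mul_sum]
    refine Finset.sum_le_sum fun j hj => ?_
    rw [Finset.mem_Ioc] at hj
    have hbx : x m ≤ x j := mono j m (by omega) (by omega) hmn
    nlinarith [hbx, hb7]
  have hG0 : (0:ℤ) ≤ ∑ j ∈ Finset.Ioc 2 (m-1), (x j)^2 :=
    Finset.sum_nonneg fun j _ => sq_nonneg _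
  have c0 : 11663 * x m ≤ ((m:ℤ)-2) * x m := by
    have h := mul_nonneg (by linarith : (0:ℤ) ≤ (m:ℤ) - 2 - 11663) (by linarith : (0:ℤ) ≤ x m)
    nlinarith [h]
  have hn2 : (0:ℤ) ≤ 6*(n:ℤ) - 12 := by omega
  rcases eq_or_lt_of_le hsa with hcase | hcase
  · -- Case B : x 2 = x 1, move unit from m to position 1
    have hy : memA n (fun i => x i + (if i = 1 then 1 else 0) + (if i = m then (-1:ℤ) else 0)) :=
      memA_update n 1 m x hx le_rfl (by norm_num) hm hmn
        (fun _ => by omega) (fun h => by omega) hm7 hafter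
    have hle := hmax _ hy
    rw [Spoly_update n 1 m x le_rfl (by omega) hmn] at hle
    have hA0 : ∑ i ∈ Finset.Icc 1 (1-1), x i = 0 := by simp
    have hGsplit : ∑ j ∈ Finset.Ioc 1 (m-1), (x j)^2
        = (x 2)^2 + ∑ j ∈ Finset.Ioc 2 (m-1), (x j)^2 := by
      rw [← Finset.sum_Ioc_consecutive _ (by omega : (1:ℕ) ≤ 2) (by omega : 2 ≤ m-1)]
      have : Finset.Ioc 1 2 = {2} := by decide
      rw [this, Finset.sum_singleton]
    rw [hA0, hGsplit] at hle
    have hkey : (x 2)^2 + x m * (T - x 1 - x 2) + ((T+1) * (x m - 1)^2 - T * (x m)^2) ≤ 0 := by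
      linarith [hle, hgainB]
    -- contradiction
    have hxx : x 1 = x 2 := hcase.symm
    have c3 : 11663 * x m ≤ 106 * x 2 - 18 := by
      linarith [c0, hE3, hE2, hs18]
    exact arithB (x 2) (x m) T n hb7 hs1 hT0 hE2 hs18 c3 (by rw [hxx] at hkey; linarith [hkey])
  · -- Case A : x 2 + 1 ≤ x 1, move unit from m to position 2
    have hy : memA n (fun i => x i + (if i = 2 then 1 else 0) + (if i = m then (-1:ℤ) else 0)) :=
      memA_update n 2 m x hx (by norm_num) le_rfl hm hmn
        (fun h => by omega) (fun _ => by omega) hm7 hafter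
    have hle := hmax _ hy
    rw [Spoly_update n 2 m x (by norm_num) (by omega) hmn] at hle
    have hA1 : ∑ i ∈ Finset.Icc 1 (2-1), x i = x 1 := by
      show ∑ i ∈ Finset.Icc 1 1, x i = x 1
      rw [Finset.Icc_self, Finset.sum_singleton]
    rw [hA1] at hle
    have hkey : x 1 * (2 * x 2 + 1) + ((T+1) * (x m - 1)^2 - T * (x m)^2) ≤ 0 := by
      linarith [hle, hG0]
    have c3A : 11663 * x m ≤ 6*(n:ℤ) - 13 - 2 * x 2 := by
      linarith [c0, hE3, hE2, hcase]
    exact arithA (x 1) (x 2) (x m) T n hb7 hs1 hT0 hcase hE2 hs18 c3A hn2 hkey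
end

section
/- There exists a constant C such that for every n ≥ 2 and every (x_1,…,x_n) ∈ A_n, S_n(x_1,…,x_n) ≤ n³ + C·n². -/
open Finset in
lemma sym_bound (s : Finset ℕ) (y : ℕ → ℤ)
    (h0 : ∀ i ∈ s, 0 ≤ y i)
    (hm : ∀ i ∈ s, ∀ j ∈ s, i < j → y j ≤ y i) :
    8 * (∑ i ∈ s, ∑ j ∈ s, if i < j then y i * y j ^ 2 else 0) * (∑ i ∈ s, y i)
      ≤ (∑ i ∈ s, y i) ^ 4 := by
  set P := ∑ i ∈ s, y i with hPdef
  set Q := ∑ i ∈ s, y i ^ 2 with hQdef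
  set R := ∑ i ∈ s, y i ^ 3 with hRdef
  set Y := ∑ i ∈ s, ∑ j ∈ s, if i < j then y i * y j ^ 2 else 0 with hYdef
  set Y' := ∑ i ∈ s, ∑ j ∈ s, if i < j then y i ^ 2 * y j else 0 with hY'def
  have hPQ : P * Q = Y + Y' + R := by
    have e1 : P * Q = ∑ i ∈ s, ∑ j ∈ s, y i * y j ^ 2 := Finset.sum_mul_sum _ _ _ _
    have e2 : ∀ i ∈ s, ∀ j ∈ s, y i * y j ^ 2 =
        (if i < j then y i * y j ^ 2 else 0) + (if j < i then y i * y j ^ 2 else 0)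
          + (if i = j then y i * y j ^ 2 else 0) := by
      intro i _ j _
      rcases lt_trichotomy i j with h | h | h
      · simp [h, asymm h, h.ne]
      · simp [h]
      · simp [h, asymm h, h.ne']
    have e3 : (∑ i ∈ s, ∑ j ∈ s, if j < i then y i * y j ^ 2 else 0) = Y' := by
      rw [Finset.sum_comm]
      refine Finset.sum_congr rfl fun i _ => Finset.sum_congr rfl fun j _ => ?_
      split_ifs <;> ring
    have e4 : (∑ i ∈ s, ∑ j ∈ s, if i = j then y i * y j ^ 2 else 0) = R := by
      refine Finset.sum_congr rfl fun i hi => ?_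
      rw [Finset.sum_ite_eq s i (fun j => y i * y j ^ 2)]
      simp [hi]; ring
    calc P * Q = ∑ i ∈ s, ∑ j ∈ s, y i * y j ^ 2 := e1
      _ = ∑ i ∈ s, ∑ j ∈ s, ((if i < j then y i * y j ^ 2 else 0)
            + (if j < i then y i * y j ^ 2 else 0) + (if i = j then y i * y j ^ 2 else 0)) := by
          exact Finset.sum_congr rfl fun i hi => Finset.sum_congr rfl fun j hj => e2 i hi j hj
      _ = Y + Y' + R := by
          simp only [Finset.sum_add_distrib]
          rw [e3, e4]
  have hYY' : Y ≤ Y' := by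
    refine Finset.sum_le_sum fun i hi => Finset.sum_le_sum fun j hj => ?_
    split_ifs with h
    · nlinarith [mul_nonneg (mul_nonneg (h0 i hi) (h0 j hj)) (sub_nonneg.2 (hm i hi j hj h))]
    · exact le_refl 0
  have hQR : Q * Q ≤ P * R := by
    have e1 : P * R = ∑ i ∈ s, ∑ j ∈ s, y i * y j ^ 3 := Finset.sum_mul_sum _ _ _ _
    have e2 : P * R = ∑ i ∈ s, ∑ j ∈ s, y j * y i ^ 3 := by
      rw [e1, Finset.sum_comm]
    have e3 : Q * Q = ∑ i ∈ s, ∑ j ∈ s, y i ^ 2 * y j ^ 2 := Finset.sum_mul_sum _ _ _ _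
    have key : ∑ i ∈ s, ∑ j ∈ s, (y i ^ 2 * y j ^ 2 + y i ^ 2 * y j ^ 2)
        ≤ ∑ i ∈ s, ∑ j ∈ s, (y i * y j ^ 3 + y j * y i ^ 3) := by
      refine Finset.sum_le_sum fun i hi => Finset.sum_le_sum fun j hj => ?_
      nlinarith [mul_nonneg (mul_nonneg (h0 i hi) (h0 j hj)) (sq_nonneg (y i - y j))]
    simp only [Finset.sum_add_distrib] at key
    rw [← e3, ← e1, ← e2] at key
    linarith
  have hP0 : 0 ≤ P := Finset.sum_nonneg h0
  have hY0 : 0 ≤ Y := by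
    refine Finset.sum_nonneg fun i hi => Finset.sum_nonneg fun j hj => ?_
    split_ifs with h
    · exact mul_nonneg (h0 i hi) (sq_nonneg _)
    · exact le_refl 0
  have hR0 : 0 ≤ R := Finset.sum_nonneg fun i hi => pow_nonneg (h0 i hi) 3
  have hmul : P * (2 * Y + R) ≤ P * (P * Q) :=
    mul_le_mul_of_nonneg_left (by linarith) hP0
  nlinarith [hmul, hQR, sq_nonneg (P ^ 2 - 2 * Q)]

set_option maxHeartbeats 1600000 in
open Finset in
/-- There is a constant `C` such that for every `n ≥ 2` and every `(x_1,…,x_n) ∈ A_n`,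
`S_n(x) ≤ n³ + C·n²`. -/
theorem stmt_17 :
    ∃ C : ℤ, ∀ n : ℕ, 2 ≤ n → ∀ x : ℕ → ℤ, memA n x →
      Spoly n x ≤ (n : ℤ) ^ 3 + C * (n : ℤ) ^ 2 := by

  refine ⟨1000, fun n hn x hx => ?_⟩
  obtain ⟨hx1, hdec, hxn, hpre, htot⟩ := hx
  have hmon : ∀ i j : ℕ, 1 ≤ i → i ≤ j → j ≤ n → x j ≤ x i := by
    intro i j h1 hij
    induction j, hij using Nat.le_induction with
    | base => intro _; exact le_refl _
    | succ j hij ih =>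
      intro hj
      exact le_trans (hdec j (le_trans h1 hij) (by omega)) (ih (by omega))
  have hx0 : ∀ i, 1 ≤ i → i ≤ n → 0 ≤ x i := fun i h1 h2 =>
    le_trans hxn (hmon i n h1 h2 le_rfl)
  have hxub : ∀ i, 1 ≤ i → i ≤ n → x i ≤ (n : ℤ) := fun i h1 h2 =>
    le_trans (hmon 1 i le_rfl h1 h2) hx1
  have hcard : (Finset.Icc 1 n).card = n := by
    rw [Nat.card_Icc]; omega
  by_cases hbig : 8 ≤ n
  · -- main case
    set y : ℕ → ℤ := fun i => max (x i - 6) 0 with hy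
    have hy0 : ∀ i, 0 ≤ y i := fun i => le_max_right _ _
    have hyx : ∀ i, x i ≤ y i + 6 := fun i => by
      have := le_max_left (x i - 6) 0
      simp only [hy]; linarith
    have hym : ∀ i j, 1 ≤ i → i ≤ j → j ≤ n → y j ≤ y i := fun i j h1 h2 h3 =>
      max_le_max (by linarith [hmon i j h1 h2 h3]) le_rfl
    -- prefix sums of y are at most 2n - 16
    have hysum : ∀ k, k ≤ n → ∑ i ∈ Icc 1 k, y i ≤ 2 * (n : ℤ) - 16 := by
      intro k
      induction k with
      | zero =>
        intro _
        have : (8 : ℤ) ≤ (n : ℤ) := by exact_mod_cast hbig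
        simp; linarith
      | succ k ih =>
        intro hk1
        by_cases h7 : x (k + 1) ≤ 6
        · have hz : y (k + 1) = 0 := max_eq_right (by linarith)
          rw [Finset.sum_Icc_succ_top (Nat.le_add_left 1 k), hz, add_zero]
          exact ih (by omega)
        · have hxk : ∀ i ∈ Icc 1 (k + 1), y i = x i - 6 := by
            intro i hi
            rw [Finset.mem_Icc] at hi
            have h7' : (7 : ℤ) ≤ x (k + 1) := by linarith
            have := hmon i (k + 1) hi.1 hi.2 hk1
            exact max_eq_left (by linarith)
          have hc2 : (Finset.Icc 1 (k + 1)).card = k + 1 := by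
            rw [Nat.card_Icc]; omega
          rw [Finset.sum_congr rfl hxk, Finset.sum_sub_distrib, Finset.sum_const, hc2,
            nsmul_eq_mul]
          have hp := hpre (k + 1) (by omega) hk1
          push_cast
          push_cast at hp
          linarith
    have hP2n : ∑ i ∈ Icc 1 n, y i ≤ 2 * (n : ℤ) := by
      have := hysum n le_rfl; linarith
    have hP0 : 0 ≤ ∑ i ∈ Icc 1 n, y i :=
      Finset.sum_nonneg fun i _ => hy0 i
    have hn0 : (0 : ℤ) ≤ (n : ℤ) := by positivity
    -- the core cubic bound
    have hY : (∑ i ∈ Icc 1 n, ∑ j ∈ Icc 1 n, if i < j then y i * y j ^ 2 else 0)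
        ≤ (n : ℤ) ^ 3 := by
      have hkey := sym_bound (Icc 1 n) y (fun i _ => hy0 i)
        (fun i hi j hj hij => by
          rw [Finset.mem_Icc] at hi hj
          exact hym i j hi.1 (le_of_lt hij) hj.2)
      set P := ∑ i ∈ Icc 1 n, y i
      set Y := ∑ i ∈ Icc 1 n, ∑ j ∈ Icc 1 n, if i < j then y i * y j ^ 2 else 0 with hYdef
      rcases eq_or_lt_of_le hP0 with hP | hP
      · -- P = 0 forces y = 0 on the interval
        have hz : ∀ i ∈ Icc 1 n, y i = 0 :=
          (Finset.sum_eq_zero_iff_of_nonneg fun i _ => hy0 i).1 hP.symm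
        have : Y = 0 := by
          rw [hYdef]
          refine Finset.sum_eq_zero fun i hi => Finset.sum_eq_zero fun j hj => ?_
          split_ifs with h
          · rw [hz i hi]; ring
          · rfl
        rw [this]; positivity
      · have h8 : 8 * Y ≤ P ^ 3 := by
          have h4 : 8 * Y * P ≤ P ^ 3 * P := by
            calc 8 * Y * P ≤ P ^ 4 := hkey
              _ = P ^ 3 * P := by ring
          exact le_of_mul_le_mul_right h4 hP
        have hP3 : P ^ 3 ≤ (2 * (n : ℤ)) ^ 3 := by
          apply pow_le_pow_left₀ (le_of_lt hP) hP2n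
        have : (2 * (n : ℤ)) ^ 3 = 8 * (n : ℤ) ^ 3 := by ring
        linarith
    -- bound Spoly by the y-version plus error terms
    have hSle : Spoly n x ≤ ∑ i ∈ Icc 1 n, ∑ j ∈ Icc 1 n,
        if i < j then (y i + 6) * (y j + 6) ^ 2 else 0 := by
      unfold Spoly
      refine Finset.sum_le_sum fun i hi => Finset.sum_le_sum fun j hj => ?_
      rw [Finset.mem_Icc] at hi hj
      split_ifs with h
      · have h1 := hx0 i hi.1 hi.2
        have h2 := hx0 j hj.1 hj.2
        have h3 := hyx i
        have h4 := hyx j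
        have h5 := hy0 i
        have h6 := hy0 j
        have hbj : x j ^ 2 ≤ (y j + 6) ^ 2 := by nlinarith
        exact mul_le_mul h3 hbj (sq_nonneg _) (by linarith)
      · exact le_refl 0
    -- expand the product
    have hexp : (∑ i ∈ Icc 1 n, ∑ j ∈ Icc 1 n,
          if i < j then (y i + 6) * (y j + 6) ^ 2 else 0)
        = (∑ i ∈ Icc 1 n, ∑ j ∈ Icc 1 n, if i < j then y i * y j ^ 2 else 0)
          + ((∑ i ∈ Icc 1 n, ∑ j ∈ Icc 1 n, if i < j then 12 * (y i * y j) else 0)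
          + (∑ i ∈ Icc 1 n, ∑ j ∈ Icc 1 n, if i < j then 6 * y j ^ 2 else 0)
          + (∑ i ∈ Icc 1 n, ∑ j ∈ Icc 1 n, if i < j then 36 * y i else 0)
          + (∑ i ∈ Icc 1 n, ∑ j ∈ Icc 1 n, if i < j then 72 * y j else 0)
          + (∑ i ∈ Icc 1 n, ∑ j ∈ Icc 1 n, if i < j then (216 : ℤ) else 0)) := by
      simp only [← Finset.sum_add_distrib]
      refine Finset.sum_congr rfl fun i _ => Finset.sum_congr rfl fun j _ => ?_
      split_ifs with h <;> ring
    -- bound each error term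
    have hB2 : (∑ i ∈ Icc 1 n, ∑ j ∈ Icc 1 n, if i < j then 12 * (y i * y j) else 0)
        ≤ 12 * ((∑ i ∈ Icc 1 n, y i) * (∑ i ∈ Icc 1 n, y i)) := by
      rw [Finset.sum_mul_sum, Finset.mul_sum]
      refine Finset.sum_le_sum fun i hi => ?_
      rw [Finset.mul_sum]
      refine Finset.sum_le_sum fun j hj => ?_
      split_ifs with h
      · exact le_refl _
      · positivity
    have hB3 : (∑ i ∈ Icc 1 n, ∑ j ∈ Icc 1 n, if i < j then 6 * y j ^ 2 else 0)
        ≤ 6 * ((∑ i ∈ Icc 1 n, y i) * (∑ i ∈ Icc 1 n, y i)) := by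
      rw [Finset.sum_mul_sum, Finset.mul_sum]
      refine Finset.sum_le_sum fun i hi => ?_
      rw [Finset.mul_sum]
      refine Finset.sum_le_sum fun j hj => ?_
      rw [Finset.mem_Icc] at hi hj
      split_ifs with h
      · have := hym i j hi.1 (le_of_lt h) hj.2
        nlinarith [hy0 i, hy0 j]
      · positivity
    have hB4 : (∑ i ∈ Icc 1 n, ∑ j ∈ Icc 1 n, if i < j then 36 * y i else 0)
        ≤ 36 * ((n : ℤ) * ∑ i ∈ Icc 1 n, y i) := by
      have : ∀ i ∈ Icc 1 n, (∑ j ∈ Icc 1 n, if i < j then 36 * y i else 0)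
          ≤ (n : ℤ) * (36 * y i) := by
        intro i hi
        calc (∑ j ∈ Icc 1 n, if i < j then 36 * y i else 0)
            ≤ ∑ _j ∈ Icc 1 n, 36 * y i := by
              refine Finset.sum_le_sum fun j _ => ?_
              split_ifs with h
              · exact le_refl _
              · positivity
          _ = (n : ℤ) * (36 * y i) := by
              rw [Finset.sum_const, hcard, nsmul_eq_mul]
      calc (∑ i ∈ Icc 1 n, ∑ j ∈ Icc 1 n, if i < j then 36 * y i else 0)
          ≤ ∑ i ∈ Icc 1 n, (n : ℤ) * (36 * y i) := Finset.sum_le_sum this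
        _ = ∑ i ∈ Icc 1 n, 36 * ((n : ℤ) * y i) :=
            Finset.sum_congr rfl fun i _ => by ring
        _ = 36 * ((n : ℤ) * ∑ i ∈ Icc 1 n, y i) := by
            rw [← Finset.mul_sum, ← Finset.mul_sum]
    have hB5 : (∑ i ∈ Icc 1 n, ∑ j ∈ Icc 1 n, if i < j then 72 * y j else 0)
        ≤ 72 * ((n : ℤ) * ∑ i ∈ Icc 1 n, y i) := by
      have : ∀ i ∈ Icc 1 n, (∑ j ∈ Icc 1 n, if i < j then 72 * y j else 0)
          ≤ 72 * ∑ j ∈ Icc 1 n, y j := by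
        intro i hi
        rw [Finset.mul_sum]
        refine Finset.sum_le_sum fun j hj => ?_
        split_ifs with h
        · exact le_refl _
        · positivity
      calc (∑ i ∈ Icc 1 n, ∑ j ∈ Icc 1 n, if i < j then 72 * y j else 0)
          ≤ ∑ _i ∈ Icc 1 n, 72 * ∑ j ∈ Icc 1 n, y j := Finset.sum_le_sum this
        _ = (n : ℤ) * (72 * ∑ j ∈ Icc 1 n, y j) := by
            rw [Finset.sum_const, hcard, nsmul_eq_mul]
        _ = 72 * ((n : ℤ) * ∑ i ∈ Icc 1 n, y i) := by ring
    have hB6 : (∑ i ∈ Icc 1 n, ∑ j ∈ Icc 1 n, if i < j then (216 : ℤ) else 0)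
        ≤ 216 * ((n : ℤ) * (n : ℤ)) := by
      have : ∀ i ∈ Icc 1 n, (∑ j ∈ Icc 1 n, if i < j then (216 : ℤ) else 0)
          ≤ (n : ℤ) * 216 := by
        intro i hi
        calc (∑ j ∈ Icc 1 n, if i < j then (216 : ℤ) else 0)
            ≤ ∑ _j ∈ Icc 1 n, (216 : ℤ) := by
              refine Finset.sum_le_sum fun j _ => ?_
              split_ifs with h
              · exact le_refl _
              · norm_num
          _ = (n : ℤ) * 216 := by rw [Finset.sum_const, hcard, nsmul_eq_mul]
      calc (∑ i ∈ Icc 1 n, ∑ j ∈ Icc 1 n, if i < j then (216 : ℤ) else 0)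
          ≤ ∑ _i ∈ Icc 1 n, (n : ℤ) * 216 := Finset.sum_le_sum this
        _ = (n : ℤ) * ((n : ℤ) * 216) := by rw [Finset.sum_const, hcard, nsmul_eq_mul]
        _ = 216 * ((n : ℤ) * (n : ℤ)) := by ring
    rw [hexp] at hSle
    have h1 : (∑ i ∈ Icc 1 n, y i) * (∑ i ∈ Icc 1 n, y i) ≤ 4 * (n : ℤ) ^ 2 := by
      nlinarith [hP0, hP2n]
    have h2 : (n : ℤ) * (∑ i ∈ Icc 1 n, y i) ≤ 2 * (n : ℤ) ^ 2 := by
      nlinarith [hn0, hP2n]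
    have h3 : (n : ℤ) * (n : ℤ) = (n : ℤ) ^ 2 := by ring
    linarith [hSle, hY, hB2, hB3, hB4, hB5, hB6, sq_nonneg ((n : ℤ))]
  · -- small n: crude bound
    have hn7 : n ≤ 7 := by omega
    have hnZ : (n : ℤ) ≤ 7 := by exact_mod_cast hn7
    have hn2 : (2 : ℤ) ≤ (n : ℤ) := by exact_mod_cast hn
    have hterm : Spoly n x ≤ (n : ℤ) * ((n : ℤ) * (n : ℤ) ^ 3) := by
      unfold Spoly
      calc (∑ i ∈ Icc 1 n, ∑ j ∈ Icc 1 n, if i < j then x i * x j ^ 2 else 0)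
          ≤ ∑ _i ∈ Icc 1 n, ∑ _j ∈ Icc 1 n, (n : ℤ) ^ 3 := by
            refine Finset.sum_le_sum fun i hi => Finset.sum_le_sum fun j hj => ?_
            rw [Finset.mem_Icc] at hi hj
            split_ifs with h
            · have h1 := hx0 i hi.1 hi.2
              have h2 := hx0 j hj.1 hj.2
              have h3 := hxub i hi.1 hi.2
              have h4 := hxub j hj.1 hj.2
              have h5 : x j ^ 2 ≤ (n : ℤ) ^ 2 := by nlinarith
              calc x i * x j ^ 2 ≤ (n : ℤ) * (n : ℤ) ^ 2 :=
                    mul_le_mul h3 h5 (sq_nonneg _) (by linarith)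
                _ = (n : ℤ) ^ 3 := by ring
            · positivity
        _ = (n : ℤ) * ((n : ℤ) * (n : ℤ) ^ 3) := by
            rw [Finset.sum_const, Finset.sum_const, hcard, nsmul_eq_mul, nsmul_eq_mul]
    have h343 : (n : ℤ) ^ 3 ≤ 343 := by
      have : (n : ℤ) ^ 3 ≤ 7 ^ 3 := pow_le_pow_left₀ (by linarith) hnZ 3
      linarith
    have h5 : (n : ℤ) * ((n : ℤ) * (n : ℤ) ^ 3) = (n : ℤ) ^ 3 * (n : ℤ) ^ 2 := by ring
    have h6 : (n : ℤ) ^ 3 * (n : ℤ) ^ 2 ≤ 343 * (n : ℤ) ^ 2 :=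
      mul_le_mul_of_nonneg_right h343 (sq_nonneg _)
    have h7 : (0 : ℤ) ≤ (n : ℤ) ^ 3 := by positivity
    linarith [hterm, h5, h6, h7, sq_nonneg ((n : ℤ))]
end

section
/- Let G be a simple graph with degree sequence x_1 ≥ x_2 ≥ ⋯ ≥ x_n (arranged in decreasing order). Then the number of paths of length 4 in G is at most Σ_{1 ≤ i < j ≤ n} x_i x_j². -/
/-!
A path `v₀ v₁ v₂ v₃ v₄` is determined by its second and fourth vertices `a ≠ b` together with
`v₀ ∈ N(a)`, `v₂ ∈ N(a) ∩ N(b)` and `v₄ ∈ N(b)`, so there are at most `d(a) d(b) min(d(a), d(b))`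
of them for each ordered pair `(a, b)`. Summing over ordered pairs counts every unordered pair
twice, and for the sorted degree sequence `min(xᵢ, xⱼ) = xⱼ` when `i < j`.
-/

open Finset SimpleGraph

theorem Finset.sum_sum_ite_ne_eq_two_nsmul_sum_sum_ite_lt {ι M : Type*} [LinearOrder ι]
    [AddCommMonoid M] (s : Finset ι) (f : ι → ι → M) (hf : ∀ i j, f i j = f j i) :
    ∑ i ∈ s, ∑ j ∈ s, (if i ≠ j then f i j else 0) =
      2 • ∑ i ∈ s, ∑ j ∈ s, if i < j then f i j else 0 := by
  have hsplit (i j : ι) : (if i ≠ j then f i j else 0) =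
      (if i < j then f i j else 0) + (if j < i then f j i else 0) := by
    rcases lt_trichotomy i j with h | rfl | h
    · simp [h, h.ne, h.not_gt]
    · simp
    · simp [h, h.ne', h.not_gt, hf i j]
  simp only [hsplit, sum_add_distrib, two_nsmul]
  rw [sum_comm (f := fun i j ↦ if j < i then f j i else 0)]

theorem Finset.sum_sum_ite_ne_mul_mul_min_eq_of_antitoneOn {ι : Type*} [LinearOrder ι]
    (s : Finset ι) {x : ι → ℕ} (hx : AntitoneOn x s) :
    ∑ i ∈ s, ∑ j ∈ s, (if i ≠ j then x i * x j * min (x i) (x j) else 0) =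
      2 * ∑ i ∈ s, ∑ j ∈ s, if i < j then x i * x j ^ 2 else 0 := by
  rw [sum_sum_ite_ne_eq_two_nsmul_sum_sum_ite_lt _ _ fun i j ↦ by rw [mul_comm (x i), min_comm],
    smul_eq_mul]
  refine congrArg _ (sum_congr rfl fun i hi ↦ sum_congr rfl fun j hj ↦ ?_)
  split_ifs with hij
  · rw [min_eq_right (hx hi hj hij.le), sq, mul_assoc]
  · rfl

theorem Equiv.sum_comp_fin_add_one {V M : Type*} [Fintype V] [AddCommMonoid M] {n : ℕ}
    (e : V ≃ Fin n) (g : ℕ → M) : ∑ a, g (e a + 1) = ∑ i ∈ Icc 1 n, g i := by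
  rw [e.sum_comp (fun i : Fin n ↦ g (i + 1)), Fin.sum_univ_eq_sum_range (fun i ↦ g (i + 1)),
    ← Ico_add_one_right_eq_Icc, sum_Ico_eq_sum_range, Nat.add_sub_cancel]
  simp only [add_comm]

theorem Equiv.sum_sum_ite_ne_comp_fin_add_one {V M : Type*} [Fintype V] [DecidableEq V]
    [AddCommMonoid M] {n : ℕ} (e : V ≃ Fin n) (f : ℕ → ℕ → M) :
    ∑ a, ∑ b, (if a ≠ b then f (e a + 1) (e b + 1) else 0) =
      ∑ i ∈ Icc 1 n, ∑ j ∈ Icc 1 n, if i ≠ j then f i j else 0 := by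
  have hne (a b : V) : a ≠ b ↔ (e a : ℕ) + 1 ≠ e b + 1 := by simp [Fin.val_inj]
  rw [← e.sum_comp_fin_add_one]
  refine sum_congr rfl fun a _ ↦ ?_
  simp only [hne a]
  exact e.sum_comp_fin_add_one fun j ↦ if (e a : ℕ) + 1 ≠ j then f (e a + 1) j else 0

namespace SimpleGraph.Walk

variable {V : Type*} {G : SimpleGraph V}

theorem sigma_ext_getVert {n : ℕ} {p q : Σ u v : V, G.Walk u v}
    (hp : p.2.2.length = n) (hq : q.2.2.length = n)
    (h : ∀ k ≤ n, p.2.2.getVert k = q.2.2.getVert k) : p = q := by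
  obtain ⟨u, v, p⟩ := p
  obtain ⟨u', v', q⟩ := q
  dsimp only at hp hq h
  obtain rfl : u = u' := by simpa using h 0 (Nat.zero_le n)
  obtain rfl : v = v' := by
    have := h n le_rfl
    rwa [← hp, getVert_length, hp, ← hq, getVert_length] at this
  rw [ext_getVert_le_length (hp.trans hq.symm) (hp ▸ h)]

end SimpleGraph.Walk

namespace SimpleGraph

variable {V : Type*} [Fintype V] [DecidableEq V] (G : SimpleGraph V) [DecidableRel G.Adj]

theorem card_inter_neighborFinset_le_min (a b : V) :
    #(G.neighborFinset a ∩ G.neighborFinset b) ≤ min (G.degree a) (G.degree b) := by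
  simp only [← card_neighborFinset_eq_degree]
  exact le_min (card_le_card inter_subset_left) (card_le_card inter_subset_right)

theorem card_isPath_length_four_le :
    Nat.card {p : Σ u v : V, G.Walk u v // p.2.2.IsPath ∧ p.2.2.length = 4} ≤
      ∑ a, ∑ b, if a ≠ b then
        G.degree a * #(G.neighborFinset a ∩ G.neighborFinset b) * G.degree b else 0 := by
  set codes := ((univ ×ˢ univ).filter fun ab : V × V ↦ ab.1 ≠ ab.2).sigma fun ab ↦
    G.neighborFinset ab.1 ×ˢ (G.neighborFinset ab.1 ∩ G.neighborFinset ab.2) ×ˢ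
      G.neighborFinset ab.2
  have hcard : #codes = ∑ a, ∑ b, if a ≠ b then
      G.degree a * #(G.neighborFinset a ∩ G.neighborFinset b) * G.degree b else 0 := by
    simp only [codes, card_sigma, sum_filter, sum_product, card_product,
      card_neighborFinset_eq_degree, mul_assoc]
  let code : {p : Σ u v : V, G.Walk u v // p.2.2.IsPath ∧ p.2.2.length = 4} → codes :=
    fun ⟨⟨u, v, p⟩, hp, hl⟩ ↦ ⟨⟨(p.getVert 1, p.getVert 3), (u, p.getVert 2, v)⟩, by
      dsimp only at hp hl
      have hadj (i : ℕ) (hi : i < 4) : G.Adj (p.getVert i) (p.getVert (i + 1)) :=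
        p.adj_getVert_succ (hl ▸ hi)
      have h01 := hadj 0 (by norm_num)
      have h34 := hadj 3 (by norm_num)
      rw [Walk.getVert_zero] at h01
      rw [show 3 + 1 = p.length by omega, Walk.getVert_length] at h34
      have h13 : p.getVert 1 ≠ p.getVert 3 := fun h ↦ by
        have := hp.getVert_injOn (by simp [hl]) (by simp [hl]) h
        omega
      simpa [codes, h13] using
        ⟨h01.symm, ⟨hadj 1 (by norm_num), (hadj 2 (by norm_num)).symm⟩, h34⟩⟩
  have hcode : Function.Injective code := by
    rintro ⟨⟨u, v, p⟩, hp, hl⟩ ⟨⟨u', v', q⟩, hq, hl'⟩ h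
    simp only [code, Subtype.mk.injEq, Sigma.mk.injEq, Prod.mk.injEq, heq_eq_eq] at h hl hl'
    obtain ⟨⟨h1, h3⟩, rfl, h2, rfl⟩ := h
    refine Subtype.ext (Walk.sigma_ext_getVert hl hl' fun k hk ↦ ?_)
    interval_cases k
    · simp
    · exact h1
    · exact h2
    · exact h3
    · rw [Walk.getVert_of_length_le _ hl.le, Walk.getVert_of_length_le _ hl'.le]
  calc _ ≤ Nat.card codes := Nat.card_le_card_of_injective code hcode
    _ = _ := by rw [Nat.card_eq_finsetCard, hcard]

theorem card_isPath_length_four_le_sum_min :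
    Nat.card {p : Σ u v : V, G.Walk u v // p.2.2.IsPath ∧ p.2.2.length = 4} ≤
      ∑ a, ∑ b, if a ≠ b then G.degree a * G.degree b * min (G.degree a) (G.degree b) else 0 := by
  refine (G.card_isPath_length_four_le).trans (sum_le_sum fun a _ ↦ sum_le_sum fun b _ ↦ ?_)
  split_ifs
  · calc G.degree a * #(G.neighborFinset a ∩ G.neighborFinset b) * G.degree b
        ≤ G.degree a * min (G.degree a) (G.degree b) * G.degree b := by
          gcongr; exact G.card_inter_neighborFinset_le_min a b
      _ = _ := by ring
  · rfl

end SimpleGraph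

theorem stmt_18_general {V : Type*} [Fintype V] (G : SimpleGraph V) [DecidableRel G.Adj]
    (n : ℕ) (x : ℕ → ℕ)
    (hdec : ∀ i, 1 ≤ i → i < n → x (i + 1) ≤ x i)
    (e : V ≃ Fin n) (hdeg : ∀ v : V, G.degree v = x ((e v : ℕ) + 1)) :
    (Nat.card {p : Σ u v : V, G.Walk u v // p.2.2.IsPath ∧ p.2.2.length = 4} : ℝ) / 2 ≤
      ∑ i ∈ Finset.Icc 1 n, ∑ j ∈ Finset.Icc 1 n,
        if i < j then (x i : ℝ) * (x j : ℝ) ^ 2 else 0 := by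
  classical
  have hx : AntitoneOn x (Icc 1 n : Finset ℕ) := by
    rw [coe_Icc]
    exact antitoneOn_of_add_one_le Set.ordConnected_Icc fun i _ hi hi' ↦ hdec i hi.1 hi'.2
  have hbound : Nat.card {p : Σ u v : V, G.Walk u v // p.2.2.IsPath ∧ p.2.2.length = 4} ≤
      2 * ∑ i ∈ Icc 1 n, ∑ j ∈ Icc 1 n, if i < j then x i * x j ^ 2 else 0 :=
    calc _ ≤ ∑ a, ∑ b, if a ≠ b then
            G.degree a * G.degree b * min (G.degree a) (G.degree b) else 0 :=
          G.card_isPath_length_four_le_sum_min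
      _ = ∑ i ∈ Icc 1 n, ∑ j ∈ Icc 1 n, if i ≠ j then x i * x j * min (x i) (x j) else 0 := by
          simp only [hdeg]
          exact e.sum_sum_ite_ne_comp_fin_add_one fun i j ↦ x i * x j * min (x i) (x j)
      _ = _ := sum_sum_ite_ne_mul_mul_min_eq_of_antitoneOn _ hx
  rw [div_le_iff₀ two_pos, mul_comm]
  exact_mod_cast hbound

/-- If `x_1 ≥ x_2 ≥ ⋯ ≥ x_n` is the degree sequence of a simple graph `G` arranged in
decreasing order, then the number of (unordered) paths of length 4 in `G` is at most
`Σ_{1 ≤ i < j ≤ n} x_i x_j²`.  Here paths are counted as walks which are paths of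
length 4; each unordered path corresponds to exactly two such walks, whence the
division by 2. -/
theorem stmt_18 {V : Type*} [Fintype V] (G : SimpleGraph V) [DecidableRel G.Adj]
    (n : ℕ) (hn : Fintype.card V = n) (x : ℕ → ℕ)
    (hdec : ∀ i, 1 ≤ i → i < n → x (i + 1) ≤ x i)
    (e : V ≃ Fin n) (hdeg : ∀ v : V, G.degree v = x ((e v : ℕ) + 1)) :
    (Nat.card {p : Σ u v : V, G.Walk u v // p.2.2.IsPath ∧ p.2.2.length = 4} : ℝ) / 2 ≤
      ∑ i ∈ Finset.Icc 1 n, ∑ j ∈ Finset.Icc 1 n,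
        if i < j then (x i : ℝ) * (x j : ℝ) ^ 2 else 0 :=
  stmt_18_general G n x hdec e hdeg
end
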